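/- Let G be a finite group, N ◁ G with G/N elementary abelian p, χ a G-stable character of N, h_χ(xN,yN) = χ([x,y]) with radical R̄_χ ⊆ G/N, and R_χ ⊆ G its preimage. Then χ extends to R_χ; R_χ is normal in G; every extension χ̃ of χ to R_χ is G-stable; and for any such χ̃ there is a unique irreducible representation η of G containing χ̃, of dimension [G:R_χ]^{1/2}. -/

import Mathlib

/-!
Since `χ` is `G`-stable, `χ ⁅n, y⁆ = χ n * χ (y n⁻¹ y⁻¹) = 1` for `n ∈ N`, so `N ≤ R`; hence `R`
contains all commutators and is normal. On `R` the character `χ` kills commutators, so it factors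
through the abelianization of `R`, where characters extend from subgroups. Any extension `ψ` is
`G`-stable because `g x g⁻¹ = x ⁅x⁻¹, g⁆` with `ψ ⁅x⁻¹, g⁆ = 1`.

By stability, the `ψ`-eigenspace of `R` in an irreducible representation `V` containing `ψ` is
`G`-invariant, hence all of `V`. For `g ∉ R` pick `y` with `ψ ⁅y, g⁆ ≠ 1`; then
`y g y⁻¹ = ⁅y, g⁆ g` forces the character of `V` to vanish at `g`. So the inner product of the
characters of two such irreducibles is `|R| dim V dim W / |G| ≠ 0`, and orthonormality gives both
`V ≅ W` and `(dim V)² = [G : R]`. An irreducible containing `ψ` exists: among the nonzero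
representations on which `R` acts by `ψ` (e.g. the `ψ`-eigenfunctions in the right regular
representation), one of minimal dimension is irreducible.
-/

open CategoryTheory Representation Module
open scoped commutatorElement

universe u v

section Commutators

variable {G : Type*} [Group G]

theorem Subgroup.normal_of_commutator_mem {H : Subgroup G} (hH : ∀ x y : G, ⁅x, y⁆ ∈ H) :
    H.Normal :=
  Subgroup.Normal.of_commutator_le _ (Subgroup.commutator_le.2 fun x _ y _ => hH x y)

theorem Subgroup.exists_monoidHom_extension_of_map_commutator_eq_one
    {k : Type*} [Field k] [IsAlgClosed k] [CharZero k] [Finite G] (N : Subgroup G) (χ : N →* kˣ)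
    (hcomm : ∀ x y : G, ⁅x, y⁆ ∈ N) (hχ : ∀ x y : G, χ ⟨⁅x, y⁆, hcomm x y⟩ = 1) :
    ∃ ψ : G →* kˣ, ∀ (n : G) (hn : n ∈ N), ψ n = χ ⟨n, hn⟩ := by
  let φ : N →* Abelianization G := Abelianization.of.comp N.subtype
  have hcommutator : _root_.commutator G ≤ χ.ker.map N.subtype := by
    rw [commutator_eq_closure, Subgroup.closure_le]
    rintro _ ⟨x, y, rfl⟩
    exact ⟨⟨⁅x, y⁆, hcomm x y⟩, hχ x y, rfl⟩
  have hker : φ.rangeRestrict.ker ≤ χ.ker := by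
    intro n hn
    rw [MonoidHom.ker_rangeRestrict, MonoidHom.mem_ker, MonoidHom.comp_apply,
      ← MonoidHom.mem_ker, Abelianization.ker_of] at hn
    obtain ⟨m, hm, hmn⟩ := hcommutator hn
    rwa [Subtype.ext hmn] at hm
  let χ₀ : φ.range →* kˣ :=
    MonoidHom.liftOfSurjective φ.rangeRestrict φ.rangeRestrict_surjective ⟨χ, hker⟩
  have : NeZero (Monoid.exponent (Abelianization G) : k) :=
    ⟨Nat.cast_ne_zero.mpr Monoid.exponent_ne_zero_of_finite⟩
  obtain ⟨ψ, hψ⟩ := MonoidHom.domRestrict_surjective k φ.range χ₀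
  refine ⟨ψ.comp Abelianization.of, fun n hn => ?_⟩
  have := DFunLike.congr_fun hψ (φ.rangeRestrict ⟨n, hn⟩)
  simp only [MonoidHom.domRestrictHom_apply, MonoidHom.domRestrict_apply,
    MonoidHom.coe_rangeRestrict, MonoidHom.liftOfSurjective,
    MonoidHom.liftOfRightInverse_comp_apply, χ₀] at this
  exact this

theorem Subgroup.exists_monoidHom_extension_of_le
    {k : Type*} [Field k] [IsAlgClosed k] [CharZero k] {N H : Subgroup G} [Finite H]
    (hNH : N ≤ H) (χ : N →* kˣ) (hcomm : ∀ x ∈ H, ∀ y ∈ H, ⁅x, y⁆ ∈ N)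
    (hχ : ∀ x (hx : x ∈ H) y (hy : y ∈ H), χ ⟨⁅x, y⁆, hcomm x hx y hy⟩ = 1) :
    ∃ ψ : H →* kˣ, ∀ (n : G) (hn : n ∈ N) (hnH : n ∈ H), ψ ⟨n, hnH⟩ = χ ⟨n, hn⟩ := by
  obtain ⟨ψ, hψ⟩ := (N.subgroupOf H).exists_monoidHom_extension_of_map_commutator_eq_one
    (χ.comp (Subgroup.subgroupOfEquivOfLe hNH).toMonoidHom)
    (fun x y => hcomm x x.2 y y.2) (fun x y => hχ x x.2 y y.2)
  exact ⟨ψ, fun n hn hnH => hψ ⟨n, hnH⟩ hn⟩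

theorem MonoidHom.map_conj_eq_iff_map_commutator_eq_one {N : Subgroup G} {M : Type*} [Monoid M]
    (χ : N →* M) (hcomm : ∀ x y : G, ⁅x, y⁆ ∈ N) :
    (∀ (g x : G) (hx : x ∈ N) (hgx : g * x * g⁻¹ ∈ N), χ ⟨g * x * g⁻¹, hgx⟩ = χ ⟨x, hx⟩) ↔
      ∀ x ∈ N, ∀ y : G, χ ⟨⁅x, y⁆, hcomm x y⟩ = 1 := by
  constructor
  · intro hχ x hx y
    have hyx := (Subgroup.normal_of_commutator_mem hcomm).conj_mem _ (N.inv_mem hx) y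
    have hsplit : (⟨⁅x, y⁆, hcomm x y⟩ : N) = ⟨x, hx⟩ * ⟨y * x⁻¹ * y⁻¹, hyx⟩ :=
      Subtype.ext (by simp only [Subgroup.coe_mul, commutatorElement_def]; group)
    rw [hsplit, map_mul, hχ y _ (N.inv_mem hx) hyx]
    exact map_mul_eq_one χ (mul_inv_cancel (⟨x, hx⟩ : N))
  · intro hχ g x hx hgx
    have hconj : (⟨g * x * g⁻¹, hgx⟩ : N) = ⟨x, hx⟩ * ⟨⁅x⁻¹, g⁆, hcomm x⁻¹ g⟩ :=
      Subtype.ext (by simp only [Subgroup.coe_mul, commutatorElement_def]; group)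
    rw [hconj, map_mul, hχ _ (N.inv_mem hx), mul_one]

end Commutators

lemma Subrepresentation.nontrivial_iff {A G W : Type*} [Semiring A] [Monoid G] [AddCommMonoid W]
    [Module A W] {ρ : Representation A G W} : Nontrivial (Subrepresentation ρ) ↔ Nontrivial W := by
  rw [← Submodule.nontrivial_iff A (M := W)]
  exact ⟨fun _ => nontrivial_of_ne ⊥ ⊤ fun h =>
      (bot_ne_top : (⊥ : Subrepresentation ρ) ≠ ⊤) (Subrepresentation.toSubmodule_injective h),
    fun _ => nontrivial_of_ne ⊥ ⊤ fun h => bot_ne_top congr(Subrepresentation.toSubmodule $h)⟩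

noncomputable section

def Representation.rightRegular (k G : Type*) [Field k] [Group G] : Representation k G (G → k) where
  toFun g := LinearMap.funLeft k k (· * g)
  map_one' := by ext; simp
  map_mul' g h := by ext; simp [mul_assoc]

namespace FDRep

section Subrepresentations

variable {k : Type u} [Field k] {G : Type v} [Group G]

lemma hom_comm_apply {V W : FDRep k G} (f : V ⟶ W) (g : G) (v : V) :
    f (V.ρ g v) = W.ρ g (f v) :=
  congr($(f.comm g) v)

lemma injective_of_mono {V W : FDRep k G} (f : V ⟶ W) [Mono f] : Function.Injective f :=
  (Rep.mono_iff_injective ((forget₂ (FDRep k G) (Rep k G)).map f)).1 inferInstance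

lemma nontrivial_of_simple (V : FDRep k G) [Simple V] : Nontrivial V := by
  by_contra h
  rw [not_nontrivial_iff_subsingleton] at h
  exact id_nonzero V (by ext v; exact Subsingleton.elim _ _)

abbrev ofSubrepresentation {V : FDRep k G} (σ : Subrepresentation V.ρ) : FDRep k G :=
  FDRep.of σ.toRepresentation

def subrepresentationι {V : FDRep k G} (σ : Subrepresentation V.ρ) :
    ofSubrepresentation σ ⟶ V where
  hom := FGModuleCat.ofHom σ.toSubmodule.subtype
  comm _ := rfl

theorem simple_iff_isIrreducible (V : FDRep k G) : Simple V ↔ IsIrreducible V.ρ := by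
  constructor
  · intro hV
    have := Subrepresentation.nontrivial_iff (ρ := V.ρ) |>.2 (nontrivial_of_simple V)
    refine ⟨fun σ => or_iff_not_imp_left.2 fun hσ => ?_⟩
    obtain ⟨w, hw, hw0⟩ := Submodule.exists_mem_ne_zero_of_ne_bot
      (fun h => hσ (Subrepresentation.toSubmodule_injective h))
    have : Mono (subrepresentationι σ) :=
      ConcreteCategory.mono_of_injective _ Subtype.val_injective
    have : IsIso (subrepresentationι σ) := isIso_of_mono_of_nonzero fun h =>
      hw0 congr($h ⟨w, hw⟩)
    refine Subrepresentation.toSubmodule_injective (eq_top_iff.2 fun v _ => ?_)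
    obtain ⟨u, rfl⟩ := (ConcreteCategory.bijective_of_isIso (subrepresentationι σ)).2 v
    exact u.2
  · intro hV
    have : Nontrivial V := Subrepresentation.nontrivial_iff (ρ := V.ρ) |>.1 inferInstance
    refine ⟨fun {Y} f _ => ⟨fun _ hf => ?_, fun hf => ?_⟩⟩
    · obtain ⟨v, hv⟩ := exists_ne (0 : V)
      obtain ⟨u, rfl⟩ := (ConcreteCategory.bijective_of_isIso f).2 v
      exact hv (by rw [hf]; rfl)
    · let range : Subrepresentation V.ρ :=
        ⟨LinearMap.range f.hom.hom.hom, fun g _ ⟨u, hu⟩ => ⟨Y.ρ g u, by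
          rw [← hu]; exact hom_comm_apply f g u⟩⟩
      have hrange : range = ⊤ := (IsSimpleOrder.eq_bot_or_eq_top range).resolve_left fun h =>
        hf (by
          ext u
          have hu : f u ∈ range := ⟨u, rfl⟩
          rw [h] at hu
          exact hu)
      refine (ConcreteCategory.isIso_iff_bijective f).2 ⟨injective_of_mono f, fun v => ?_⟩
      exact (show v ∈ range from hrange ▸ trivial)

end Subrepresentations

section WeightSpace

variable {k : Type u} [Field k] {G : Type v} [Group G] {R : Subgroup G} (ψ : R →* kˣ)

def weightSpace (V : FDRep k G) : Submodule k V :=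
  ⨅ x : R, End.eigenspace (V.ρ x) (ψ x : k)

variable {ψ}

lemma mem_weightSpace {V : FDRep k G} {v : V} :
    v ∈ weightSpace ψ V ↔ ∀ x : R, V.ρ x v = (ψ x : k) • v := by
  simp only [weightSpace, Submodule.mem_iInf, End.mem_eigenspace_iff]

lemma weightSpace_ne_bot_iff {V : FDRep k G} :
    weightSpace ψ V ≠ ⊥ ↔ ∃ v : V, v ≠ 0 ∧ ∀ x : R, V.ρ x v = (ψ x : k) • v := by
  simp only [Submodule.ne_bot_iff, mem_weightSpace]
  exact ⟨fun ⟨v, hv, h0⟩ => ⟨v, h0, hv⟩, fun ⟨v, h0, hv⟩ => ⟨v, hv, h0⟩⟩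

lemma ρ_eq_smul_id_of_weightSpace_eq_top {V : FDRep k G} (hV : weightSpace ψ V = ⊤) (x : R) :
    V.ρ x = (ψ x : k) • LinearMap.id :=
  LinearMap.ext fun _ => mem_weightSpace.1 (hV.ge Submodule.mem_top) x

lemma character_coe_of_weightSpace_eq_top {V : FDRep k G} (hV : weightSpace ψ V = ⊤) (x : R) :
    V.character x = ψ x * finrank k V := by
  rw [character, ρ_eq_smul_id_of_weightSpace_eq_top hV, map_smul, LinearMap.trace_id,
    smul_eq_mul]

lemma character_eq_zero_of_weightSpace_eq_top {V : FDRep k G} (hV : weightSpace ψ V = ⊤)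
    {g y : G} (hyg : ⁅y, g⁆ ∈ R) (hψ : ψ ⟨⁅y, g⁆, hyg⟩ ≠ 1) : V.character g = 0 := by
  have hmul : V.character g = ψ ⟨⁅y, g⁆, hyg⟩ * V.character g := by
    calc V.character g = V.character (⁅y, g⁆ * g) := by
          rw [commutatorElement_def, inv_mul_cancel_right, char_conj]
      _ = ψ ⟨⁅y, g⁆, hyg⟩ * V.character g := by
          rw [character, map_mul, End.mul_eq_comp,
            ρ_eq_smul_id_of_weightSpace_eq_top hV ⟨_, hyg⟩, LinearMap.smul_comp,
            LinearMap.id_comp, map_smul, smul_eq_mul]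
          rfl
  have hne : (ψ ⟨⁅y, g⁆, hyg⟩ : k) ≠ 1 := fun h => hψ (Units.val_eq_one.1 h)
  by_contra h
  exact hne ((mul_eq_right₀ h).1 hmul.symm)

lemma weightSpace_ofSubrepresentation_eq_top {V : FDRep k G} {σ : Subrepresentation V.ρ}
    (hσ : σ.toSubmodule ≤ weightSpace ψ V) : weightSpace ψ (ofSubrepresentation σ) = ⊤ :=
  eq_top_iff.2 fun w _ => mem_weightSpace.2 fun x => Subtype.ext (mem_weightSpace.1 (hσ w.2) x)

lemma exists_simple_of_weightSpace_eq_top (V : FDRep k G) [Nontrivial V]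
    (hV : weightSpace ψ V = ⊤) : ∃ W : FDRep k G, Simple W ∧ weightSpace ψ W = ⊤ := by
  classical
  have hex : ∃ d, ∃ W : FDRep k G, Nontrivial W ∧ weightSpace ψ W = ⊤ ∧ finrank k W = d :=
    ⟨_, V, inferInstance, hV, rfl⟩
  obtain ⟨W, hW, hWψ, hWd⟩ := Nat.find_spec hex
  refine ⟨W, (simple_iff_isIrreducible W).2 ?_, hWψ⟩
  have := Subrepresentation.nontrivial_iff (ρ := W.ρ) |>.2 hW
  refine ⟨fun σ => or_iff_not_imp_left.2 fun hσ => ?_⟩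
  have : Nontrivial (ofSubrepresentation σ) := Submodule.nontrivial_iff_ne_bot.2
    fun h => hσ (Subrepresentation.toSubmodule_injective h)
  have hle : finrank k W ≤ finrank k σ.toSubmodule := hWd ▸ Nat.find_min' hex
    ⟨_, inferInstance, weightSpace_ofSubrepresentation_eq_top (le_top.trans hWψ.ge), rfl⟩
  exact Subrepresentation.toSubmodule_injective
    (Submodule.eq_top_of_finrank_eq (le_antisymm (Submodule.finrank_le _) hle))

section Stable

variable [R.Normal]
    (hψ : ∀ (g x : G) (hx : x ∈ R) (hgx : g * x * g⁻¹ ∈ R), ψ ⟨g * x * g⁻¹, hgx⟩ = ψ ⟨x, hx⟩)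
include hψ

lemma ρ_mem_weightSpace {V : FDRep k G} (g : G) {v : V} (hv : v ∈ weightSpace ψ V) :
    V.ρ g v ∈ weightSpace ψ V := by
  refine mem_weightSpace.2 fun ⟨x, hx⟩ => ?_
  have hconj : g⁻¹ * x * g ∈ R := by simpa using Subgroup.Normal.conj_mem ‹_› x hx g⁻¹
  have hψx : ψ ⟨x, hx⟩ = ψ ⟨g⁻¹ * x * g, hconj⟩ := by
    rw [← hψ g _ hconj (by simpa [mul_assoc] using hx)]
    congr 2
    group
  calc V.ρ x (V.ρ g v) = V.ρ g (V.ρ (g⁻¹ * x * g) v) := by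
        rw [← End.mul_apply, ← map_mul, ← End.mul_apply, ← map_mul]
        congr 2
        group
    _ = (ψ ⟨x, hx⟩ : k) • V.ρ g v := by
        rw [mem_weightSpace.1 hv ⟨_, hconj⟩, map_smul, hψx]

def weightSubrepresentation (V : FDRep k G) : Subrepresentation V.ρ :=
  ⟨weightSpace ψ V, fun g _ => ρ_mem_weightSpace hψ g⟩

lemma weightSpace_eq_top_of_simple {V : FDRep k G} [Simple V] (hV : weightSpace ψ V ≠ ⊥) :
    weightSpace ψ V = ⊤ := by
  have := (simple_iff_isIrreducible V).1 inferInstance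
  exact congr(Subrepresentation.toSubmodule $((IsSimpleOrder.eq_bot_or_eq_top
    (weightSubrepresentation hψ V)).resolve_left fun h => hV congr(Subrepresentation.toSubmodule $h)))

end Stable

end WeightSpace

section RightRegular

variable {k G : Type u} [Field k] [Group G] [Finite G] {R : Subgroup G} [R.Normal] {ψ : R →* kˣ}

lemma exists_nontrivial_weightSpace_eq_top
    (hψ : ∀ (g x : G) (hx : x ∈ R) (hgx : g * x * g⁻¹ ∈ R), ψ ⟨g * x * g⁻¹, hgx⟩ = ψ ⟨x, hx⟩) :
    ∃ V : FDRep k G, Nontrivial V ∧ weightSpace ψ V = ⊤ := by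
  classical
  let V := FDRep.of (rightRegular k G)
  let f₀ : G → k := fun u => if h : u ∈ R then (ψ ⟨u, h⟩ : k) else 0
  have hf₀ : f₀ ∈ weightSpace ψ V := mem_weightSpace.2 fun x => funext fun u => by
    by_cases hu : u ∈ R
    · have hux : (⟨u * x, R.mul_mem hu x.2⟩ : R) = ⟨u, hu⟩ * x := rfl
      simp [V, rightRegular, f₀, hu, R.mul_mem hu x.2, hux, mul_comm]
    · simp [V, rightRegular, f₀, hu, Subgroup.mul_mem_cancel_right R x.2]
  refine ⟨ofSubrepresentation (weightSubrepresentation hψ V), ?_,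
    weightSpace_ofSubrepresentation_eq_top le_rfl⟩
  refine nontrivial_of_ne (⟨f₀, hf₀⟩ : weightSpace ψ V) 0 fun h => ?_
  simpa [f₀] using congr_fun congr(Subtype.val $h) 1

end RightRegular

section Radical

variable {k G : Type u} [Field k] [Group G] {R : Subgroup G} {ψ : R →* kˣ}
    (hcomm : ∀ x y : G, ⁅x, y⁆ ∈ R) (hR : ∀ x : G, x ∈ R ↔ ∀ y : G, ψ ⟨⁅x, y⁆, hcomm x y⟩ = 1)
include hR

lemma character_eq_zero_of_notMem {V : FDRep k G} (hV : weightSpace ψ V = ⊤) {g : G}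
    (hg : g ∉ R) : V.character g = 0 := by
  obtain ⟨y, hy⟩ := not_forall.1 (mt (hR g).2 hg)
  refine character_eq_zero_of_weightSpace_eq_top hV (hcomm y g) fun h => hy ?_
  have hinv : (⟨⁅g, y⁆, hcomm g y⟩ : R) = (⟨⁅y, g⁆, hcomm y g⟩ : R)⁻¹ :=
    Subtype.ext (commutatorElement_inv y g).symm
  rw [hinv, map_inv, h, inv_one]

lemma sum_character_mul_character_inv [Fintype G] {V W : FDRep k G} (hV : weightSpace ψ V = ⊤)
    (hW : weightSpace ψ W = ⊤) :
    ∑ g : G, V.character g * W.character g⁻¹ = finrank k V * finrank k W * Nat.card R := by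
  classical
  have hterm : ∀ g : G, V.character g * W.character g⁻¹ =
      if g ∈ R then (finrank k V * finrank k W : k) else 0 := by
    intro g
    split_ifs with hg
    · have hW' : W.character g⁻¹ = ψ (⟨g, hg⟩ : R)⁻¹ * finrank k W :=
        character_coe_of_weightSpace_eq_top hW (⟨g, hg⟩⁻¹ : R)
      rw [character_coe_of_weightSpace_eq_top hV ⟨g, hg⟩, hW', map_inv, Units.val_inv_eq_inv_val]
      field_simp
    · rw [character_eq_zero_of_notMem hcomm hR hV hg, zero_mul]
  rw [Finset.sum_congr rfl fun g _ => hterm g, Finset.sum_ite, Finset.sum_const,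
    Finset.sum_const_zero, add_zero, nsmul_eq_mul, ← Fintype.card_subtype,
    ← Nat.card_eq_fintype_card, mul_comm]

variable [IsAlgClosed k] [CharZero k] [Finite G]

lemma finrank_sq_eq_index {V : FDRep k G} [Simple V] (hV : weightSpace ψ V = ⊤) :
    finrank k V ^ 2 = R.index := by
  have : Fintype G := Fintype.ofFinite G
  have hG : (Nat.card G : k) ≠ 0 := Nat.cast_ne_zero.2 Nat.card_pos.ne'
  have : Invertible (Nat.card G : k) := invertibleOfNonzero hG
  have horth := char_orthonormal V V
  rw [if_pos ⟨Iso.refl V⟩, sum_character_mul_character_inv hcomm hR hV hV,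
    inv_mul_eq_one₀ hG] at horth
  have hcard : finrank k V ^ 2 * Nat.card R = R.index * Nat.card R := by
    rw [mul_comm R.index, R.card_mul_index]
    exact_mod_cast ((sq (finrank k V : k)).symm ▸ horth).symm
  exact Nat.eq_of_mul_eq_mul_right Nat.card_pos hcard

lemma nonempty_iso_of_weightSpace_eq_top {V W : FDRep k G} [Simple V] [Simple W]
    (hV : weightSpace ψ V = ⊤) (hW : weightSpace ψ W = ⊤) : Nonempty (W ≅ V) := by
  classical
  have : Fintype G := Fintype.ofFinite G
  have hG : (Nat.card G : k) ≠ 0 := Nat.cast_ne_zero.2 Nat.card_pos.ne'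
  have : Invertible (Nat.card G : k) := invertibleOfNonzero hG
  have := nontrivial_of_simple V
  have := nontrivial_of_simple W
  have horth := char_orthonormal W V
  rw [sum_character_mul_character_inv hcomm hR hW hV] at horth
  by_contra hWV
  rw [if_neg hWV] at horth
  simp only [mul_eq_zero, inv_eq_zero, Nat.cast_eq_zero] at horth
  rcases horth with h | (h | h) | h
  · exact Nat.card_pos.ne' h
  · exact finrank_pos.ne' h
  · exact finrank_pos.ne' h
  · exact Nat.card_pos.ne' h

theorem exists_simple_finrank_sq_eq_index :
    ∃ V : FDRep k G, Simple V ∧ (∃ v : V, v ≠ 0 ∧ ∀ x : R, V.ρ x v = (ψ x : k) • v) ∧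
      finrank k V ^ 2 = R.index ∧
      ∀ W : FDRep k G, Simple W → (∃ w : W, w ≠ 0 ∧ ∀ x : R, W.ρ x w = (ψ x : k) • w) →
        Nonempty (W ≅ V) := by
  have := Subgroup.normal_of_commutator_mem hcomm
  have hψ := (ψ.map_conj_eq_iff_map_commutator_eq_one hcomm).2 fun x hx => (hR x).1 hx
  obtain ⟨V₀, _, hV₀⟩ := exists_nontrivial_weightSpace_eq_top (k := k) hψ
  obtain ⟨V, _, hV⟩ := exists_simple_of_weightSpace_eq_top V₀ hV₀
  have := nontrivial_of_simple V
  refine ⟨V, ‹_›, weightSpace_ne_bot_iff.1 (hV ▸ top_ne_bot), finrank_sq_eq_index hcomm hR hV,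
    fun W _ hW => nonempty_iso_of_weightSpace_eq_top hcomm hR hV
      (weightSpace_eq_top_of_simple hψ (weightSpace_ne_bot_iff.2 hW))⟩

end Radical

end FDRep

end

theorem statement_13_general
    (G : Type) [Group G] [Finite G]
    (Nsub : Subgroup G) (hN : Nsub.Normal)
    (hab : ∀ x y : G, ⁅x, y⁆ ∈ Nsub)
    (χ : Nsub →* ℂˣ)
    (hstab : ∀ (g : G) (n : G) (hn : n ∈ Nsub),
      χ ⟨g * n * g⁻¹, hN.conj_mem n hn g⟩ = χ ⟨n, hn⟩)
    (R : Subgroup G)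
    (hR : ∀ x : G, x ∈ R ↔ ∀ y : G, χ ⟨⁅x, y⁆, hab x y⟩ = 1) :
    -- `N ≤ R` and `χ` extends to `R`:
    Nsub ≤ R ∧
    (∃ χext : R →* ℂˣ, ∀ (n : G) (hn : n ∈ Nsub) (hnR : n ∈ R),
      χext ⟨n, hnR⟩ = χ ⟨n, hn⟩) ∧
    -- `R` is normal in `G`:
    R.Normal ∧
    -- every extension of `χ` to `R` is `G`-stable:
    (∀ χext : R →* ℂˣ,
      (∀ (n : G) (hn : n ∈ Nsub) (hnR : n ∈ R), χext ⟨n, hnR⟩ = χ ⟨n, hn⟩) →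
      ∀ (g x : G) (hx : x ∈ R) (hgx : g * x * g⁻¹ ∈ R),
        χext ⟨g * x * g⁻¹, hgx⟩ = χext ⟨x, hx⟩) ∧
    -- the Heisenberg lift of any extension exists, is unique, and has dimension `[G:R]^{1/2}`:
    (∀ χext : R →* ℂˣ,
      (∀ (n : G) (hn : n ∈ Nsub) (hnR : n ∈ R), χext ⟨n, hnR⟩ = χ ⟨n, hn⟩) →
      ∃ V : FDRep ℂ G, Simple V ∧
        (∃ v : V, v ≠ 0 ∧ ∀ x : R, V.ρ (x : G) v = (χext x : ℂ) • v) ∧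
        (Module.finrank ℂ V) ^ 2 = R.index ∧
        ∀ W : FDRep ℂ G, Simple W →
          (∃ w : W, w ≠ 0 ∧ ∀ x : R, W.ρ (x : G) w = (χext x : ℂ) • w) →
          Nonempty (W ≅ V)) := by
  have hNR : Nsub ≤ R := fun n hn => (hR n).2
    ((χ.map_conj_eq_iff_map_commutator_eq_one hab).1 (fun g n hn _ => hstab g n hn) n hn)
  have hcomm : ∀ x y : G, ⁅x, y⁆ ∈ R := fun x y => hNR (hab x y)
  have hradical : ∀ χext : R →* ℂˣ,
      (∀ (n : G) (hn : n ∈ Nsub) (hnR : n ∈ R), χext ⟨n, hnR⟩ = χ ⟨n, hn⟩) →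
      ∀ x : G, x ∈ R ↔ ∀ y : G, χext ⟨⁅x, y⁆, hcomm x y⟩ = 1 := fun χext hext x => by
    simp only [hext _ (hab x _)]
    exact hR x
  refine ⟨hNR, ?_, Subgroup.normal_of_commutator_mem hcomm,
    fun χext hext => (χext.map_conj_eq_iff_map_commutator_eq_one hcomm).2
      fun x hx => (hradical χext hext x).1 hx,
    fun χext hext => FDRep.exists_simple_finrank_sq_eq_index hcomm (hradical χext hext)⟩
  exact Subgroup.exists_monoidHom_extension_of_le hNR χ (fun x _ y _ => hab x y)
    fun x hx y _ => (hR x).1 hx y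

/-- general Heisenberg lift.  With `G`, `N`, `χ` as in the Heisenberg setting
and `R = R_χ` the preimage in `G` of the radical of `h_χ`: `χ` extends to `R`; `R` is normal
in `G`; every extension `χ̃` of `χ` to `R` is `G`-stable; and for every such extension there
is a unique irreducible representation of `G` containing it, of dimension `[G:R]^{1/2}`. -/
theorem statement_13
    (G : Type) [Group G] [Finite G] (p : ℕ) (hp : p.Prime)
    (Nsub : Subgroup G) (hN : Nsub.Normal)
    (hab : ∀ x y : G, ⁅x, y⁆ ∈ Nsub)
    (hpow : ∀ x : G, x ^ p ∈ Nsub)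
    (χ : Nsub →* ℂˣ)
    (hstab : ∀ (g : G) (n : G) (hn : n ∈ Nsub),
      χ ⟨g * n * g⁻¹, hN.conj_mem n hn g⟩ = χ ⟨n, hn⟩)
    (R : Subgroup G)
    (hR : ∀ x : G, x ∈ R ↔ ∀ y : G, χ ⟨⁅x, y⁆, hab x y⟩ = 1) :
    -- `N ≤ R` and `χ` extends to `R`:
    Nsub ≤ R ∧
    (∃ χext : R →* ℂˣ, ∀ (n : G) (hn : n ∈ Nsub) (hnR : n ∈ R),
      χext ⟨n, hnR⟩ = χ ⟨n, hn⟩) ∧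
    -- `R` is normal in `G`:
    R.Normal ∧
    -- every extension of `χ` to `R` is `G`-stable:
    (∀ χext : R →* ℂˣ,
      (∀ (n : G) (hn : n ∈ Nsub) (hnR : n ∈ R), χext ⟨n, hnR⟩ = χ ⟨n, hn⟩) →
      ∀ (g x : G) (hx : x ∈ R) (hgx : g * x * g⁻¹ ∈ R),
        χext ⟨g * x * g⁻¹, hgx⟩ = χext ⟨x, hx⟩) ∧
    -- the Heisenberg lift of any extension exists, is unique, and has dimension `[G:R]^{1/2}`:
    (∀ χext : R →* ℂˣ,
      (∀ (n : G) (hn : n ∈ Nsub) (hnR : n ∈ R), χext ⟨n, hnR⟩ = χ ⟨n, hn⟩) →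
      ∃ V : FDRep ℂ G, Simple V ∧
        (∃ v : V, v ≠ 0 ∧ ∀ x : R, V.ρ (x : G) v = (χext x : ℂ) • v) ∧
        (Module.finrank ℂ V) ^ 2 = R.index ∧
        ∀ W : FDRep ℂ G, Simple W →
          (∃ w : W, w ≠ 0 ∧ ∀ x : R, W.ρ (x : G) w = (χext x : ℂ) • w) →
          Nonempty (W ≅ V)) :=
  statement_13_general G Nsub hN hab χ hstab R hR
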